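/- arXiv:1207.6612 — 2 statements merged into one kernel-verified Lean document; each statement's English description precedes it below -/
import Mathlib

section
/- Suppose G satisfies the curvature-dimension inequality CD(m,κ). Then for every vertex x ∈ V and every function f : V → ℝ, (4/m − 2) (Δf(x))² + (2 + 2κ) |∇f|²(x) ≤ (1/d(x)) Σ_y (w(x,y)/d(y)) Σ_z w(y,z) (f(x) − 2 f(y) + f(z))². -/
open Finset

/-- The weighted degree `d(x) = Σ_y w(x,y)`. -/
noncomputable def deg {V : Type*} [Fintype V] (w : V → V → ℝ) (x : V) : ℝ :=
  ∑ y, w x y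

/-- The graph Laplacian `Δf(x) = (1/d(x)) Σ_y w(x,y) (f(y) − f(x))`. -/
noncomputable def lap {V : Type*} [Fintype V] (w : V → V → ℝ) (f : V → ℝ) (x : V) : ℝ :=
  (1 / deg w x) * ∑ y, w x y * (f y - f x)

/-- The bilinear operator `Γ(f,g)(x) = (1/2)(Δ(fg)(x) − f(x)Δg(x) − g(x)Δf(x))`. -/
noncomputable def gam {V : Type*} [Fintype V] (w : V → V → ℝ) (f g : V → ℝ) (x : V) : ℝ :=
  (1 / 2) * (lap w (fun y => f y * g y) x - f x * lap w g x - g x * lap w f x)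

/-- The curvature operator `Γ₂(f,g)(x) = (1/2)(ΔΓ(f,g)(x) − Γ(f,Δg)(x) − Γ(g,Δf)(x))`. -/
noncomputable def gam2 {V : Type*} [Fintype V] (w : V → V → ℝ) (f g : V → ℝ) (x : V) : ℝ :=
  (1 / 2) * (lap w (gam w f g) x - gam w f (lap w g) x - gam w g (lap w f) x)

/-- The gradient square `|∇f|²(x) = (1/d(x)) Σ_y w(x,y) (f(x) − f(y))²`. -/
noncomputable def gradsq {V : Type*} [Fintype V] (w : V → V → ℝ) (f : V → ℝ) (x : V) : ℝ :=
  (1 / deg w x) * ∑ y, w x y * (f x - f y) ^ 2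

/-- The curvature-dimension inequality `CD(m,κ)`. -/
def CD {V : Type*} [Fintype V] (w : V → V → ℝ) (m κ : ℝ) : Prop :=
  ∀ (f : V → ℝ) (x : V), gam2 w f f x ≥ (1 / m) * (lap w f x) ^ 2 + κ * gam w f f x

/-! Expanding `f(x) − 2f(y) + f(z) = (f(z) − f(y)) − (f(y) − f(x))` gives the pointwise identity
`(1/d(x)) Σ_y (w(x,y)/d(y)) Σ_z w(y,z) (f(x) − 2f(y) + f(z))² = 4Γ₂(f,f)(x) + 2|∇f|²(x) − 2(Δf(x))²`,
and `CD(m,κ)` together with `Γ(f,f) = |∇f|²/2` bounds `4Γ₂(f,f)(x)` from below. -/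

section

variable {V : Type*} [Fintype V] (w : V → V → ℝ)

lemma lap_eq_sub {x : V} (hx : deg w x ≠ 0) (g : V → ℝ) :
    lap w g x = (1 / deg w x) * ∑ y, w x y * g y - g x := by
  have hsplit : ∑ y, w x y * (g y - g x) = ∑ y, w x y * g y - g x * deg w x := by
    rw [deg, Finset.mul_sum, ← Finset.sum_sub_distrib]
    exact Finset.sum_congr rfl fun y _ => by ring
  rw [lap, hsplit]
  field_simp

lemma gam_eq_sum (f g : V → ℝ) (x : V) :
    gam w f g x = (1 / (2 * deg w x)) * ∑ y, w x y * ((f y - f x) * (g y - g x)) := by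
  have hS : (∑ y, w x y * (f y * g y - f x * g x))
      - f x * (∑ y, w x y * (g y - g x)) - g x * (∑ y, w x y * (f y - f x))
      = ∑ y, w x y * ((f y - f x) * (g y - g x)) := by
    rw [Finset.mul_sum, Finset.mul_sum, ← Finset.sum_sub_distrib, ← Finset.sum_sub_distrib]
    exact Finset.sum_congr rfl fun y _ => by ring
  unfold gam lap
  linear_combination (1 / (2 * deg w x)) * hS

lemma gam_self (f : V → ℝ) : gam w f f = fun x => (1 / 2) * gradsq w f x := by
  funext x
  rw [gam_eq_sum, gradsq]
  have hsq : ∑ y, w x y * ((f y - f x) * (f y - f x)) = ∑ y, w x y * (f x - f y) ^ 2 :=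
    Finset.sum_congr rfl fun y _ => by ring
  rw [hsq]
  ring

lemma four_mul_gam2_self {x : V} (hx : deg w x ≠ 0) (f : V → ℝ) :
    4 * gam2 w f f x =
      (1 / deg w x) * ∑ y, w x y * (gradsq w f y - 2 * ((f y - f x) * lap w f y))
        - gradsq w f x + 2 * (lap w f x) ^ 2 := by
  have hgam : gam w f (lap w f) x
      = (1 / (2 * deg w x)) * ∑ y, w x y * ((f y - f x) * lap w f y)
        - (1 / 2) * (lap w f x) ^ 2 := by
    have hsplit : ∑ y, w x y * ((f y - f x) * (lap w f y - lap w f x))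
        = ∑ y, w x y * ((f y - f x) * lap w f y) - lap w f x * ∑ y, w x y * (f y - f x) := by
      rw [Finset.mul_sum, ← Finset.sum_sub_distrib]
      exact Finset.sum_congr rfl fun y _ => by ring
    rw [gam_eq_sum, hsplit, lap]
    field_simp
  have hhalf : ∑ y, w x y * ((1 / 2) * gradsq w f y) = (1 / 2) * ∑ y, w x y * gradsq w f y := by
    rw [Finset.mul_sum]
    exact Finset.sum_congr rfl fun y _ => by ring
  have hsplit : ∑ y, w x y * (gradsq w f y - 2 * ((f y - f x) * lap w f y))
      = ∑ y, w x y * gradsq w f y - 2 * ∑ y, w x y * ((f y - f x) * lap w f y) := by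
    rw [Finset.mul_sum, ← Finset.sum_sub_distrib]
    exact Finset.sum_congr rfl fun y _ => by ring
  rw [gam2, hgam, gam_self, lap_eq_sub w hx, hhalf, hsplit]
  ring

lemma sum_sq_second_difference {y : V} (hy : deg w y ≠ 0) (f : V → ℝ) (a : ℝ) :
    (1 / deg w y) * ∑ z, w y z * (a - 2 * f y + f z) ^ 2
      = gradsq w f y - 2 * ((f y - a) * lap w f y) + (f y - a) ^ 2 := by
  have hexpand : ∑ z, w y z * (a - 2 * f y + f z) ^ 2
      = ∑ z, w y z * (f y - f z) ^ 2 - 2 * (f y - a) * ∑ z, w y z * (f z - f y)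
        + (f y - a) ^ 2 * deg w y := by
    rw [deg, Finset.mul_sum, Finset.mul_sum, ← Finset.sum_sub_distrib, ← Finset.sum_add_distrib]
    exact Finset.sum_congr rfl fun z _ => by ring
  rw [hexpand, gradsq, lap]
  field_simp

lemma sum_sq_second_difference_eq (hdeg : ∀ x, deg w x ≠ 0) (f : V → ℝ) (x : V) :
    (1 / deg w x) * ∑ y, (w x y / deg w y) * ∑ z, w y z * (f x - 2 * f y + f z) ^ 2
      = 4 * gam2 w f f x + 2 * gradsq w f x - 2 * (lap w f x) ^ 2 := by
  have hinner : ∀ y, (w x y / deg w y) * ∑ z, w y z * (f x - 2 * f y + f z) ^ 2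
      = w x y * (gradsq w f y - 2 * ((f y - f x) * lap w f y)) + w x y * (f x - f y) ^ 2 := by
    intro y
    rw [div_eq_mul_one_div, mul_assoc, sum_sq_second_difference w (hdeg y)]
    ring
  rw [Finset.sum_congr rfl fun y _ => hinner y, Finset.sum_add_distrib, mul_add,
    four_mul_gam2_self w (hdeg x), gradsq]
  ring

end

theorem lemma_CD_inequality_general {V : Type*} [Fintype V] (w : V → V → ℝ)
    (hdeg : ∀ x, 0 < deg w x)
    (m κ : ℝ) (hCD : CD w m κ)
    (f : V → ℝ) (x : V) :
    (4 / m - 2) * (lap w f x) ^ 2 + (2 + 2 * κ) * gradsq w f x ≤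
      (1 / deg w x) * ∑ y, (w x y / deg w y) *
        ∑ z, w y z * (f x - 2 * f y + f z) ^ 2 := by
  rw [sum_sq_second_difference_eq w (fun y => (hdeg y).ne') f x]
  have hcd := hCD f x
  simp only [gam_self] at hcd
  linear_combination 4 * hcd

theorem lemma_CD_inequality {V : Type*} [Fintype V] (w : V → V → ℝ)
    (hsymm : ∀ x y, w x y = w y x) (hnonneg : ∀ x y, 0 ≤ w x y)
    (hloop : ∀ x, w x x = 0) (hdeg : ∀ x, 0 < deg w x)
    (m κ : ℝ) (hm : 0 < m) (hCD : CD w m κ)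
    (f : V → ℝ) (x : V) :
    (4 / m - 2) * (lap w f x) ^ 2 + (2 + 2 * κ) * gradsq w f x ≤
      (1 / deg w x) * ∑ y, (w x y / deg w y) *
        ∑ z, w y z * (f x - 2 * f y + f z) ^ 2 :=
  lemma_CD_inequality_general w hdeg m κ hCD f x
end

section
/- Suppose G is a finite connected simple (unweighted) graph with maximum degree d and diameter D, G satisfies the curvature-dimension inequality CD(m,0), and λ is a nonzero eigenvalue of the operator −Δ (i.e., there is a nonconstant function f : V → ℝ with −Δf(x) = λ f(x) for all x ∈ V). Then λ ≥ 1 / ((4 − 1/m)·d·D²). -/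
open Finset

/-!
Let `-Δf = λf` and `M = max f - min f`. The maximum principle gives `λ > 0` and
`max f ≥ 0 ≥ min f`, hence `|f| ≤ M`. Applied to `H = Γ(f,f) + 2λf²`, whose Laplacian is
`2Γ₂(f,f) + 2λΓ(f,f) - 4λ²f²`, together with `CD(m,0)` it gives
`|∇f|² = 2Γ(f,f) ≤ 2(4 - 1/m)λM²` everywhere and forces `4 - 1/m ≥ 2`; at the extrema of `f`
the eigenvalue equation alone gives the sharper `|∇f|² ≤ 2λM²`. Along a shortest path between
the extrema, the squared increments of two consecutive edges are bounded by the gradient at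
their common vertex, and Cauchy–Schwarz yields `M² ≤ (4 - 1/m) d D² λ M²`.
-/

section Laplacian

variable {V : Type*} [Fintype V] {w : V → V → ℝ}

lemma deg_nonneg (hw : ∀ x y, 0 ≤ w x y) (x : V) : 0 ≤ deg w x :=
  sum_nonneg fun y _ => hw x y

lemma lap_add (f g : V → ℝ) (x : V) :
    lap w (fun y => f y + g y) x = lap w f x + lap w g x := by
  simp only [lap, ← mul_add, ← sum_add_distrib]
  congr 1
  exact sum_congr rfl fun y _ => by ring

lemma lap_const_mul (c : ℝ) (f : V → ℝ) (x : V) :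
    lap w (fun y => c * f y) x = c * lap w f x := by
  simp only [lap, mul_sum]
  exact sum_congr rfl fun y _ => by ring

lemma lap_neg (f : V → ℝ) (x : V) : lap w (fun y => -f y) x = -lap w f x := by
  simpa using lap_const_mul (w := w) (-1) f x

lemma lap_nonpos_of_forall_le (hw : ∀ x y, 0 ≤ w x y) {f : V → ℝ} {x : V}
    (hx : ∀ y, f y ≤ f x) : lap w f x ≤ 0 :=
  mul_nonpos_of_nonneg_of_nonpos (one_div_nonneg.mpr (deg_nonneg hw x))
    (sum_nonpos fun y _ => mul_nonpos_of_nonneg_of_nonpos (hw x y) (sub_nonpos.mpr (hx y)))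

lemma lap_nonneg_of_forall_ge (hw : ∀ x y, 0 ≤ w x y) {f : V → ℝ} {x : V}
    (hx : ∀ y, f x ≤ f y) : 0 ≤ lap w f x :=
  mul_nonneg (one_div_nonneg.mpr (deg_nonneg hw x))
    (sum_nonneg fun y _ => mul_nonneg (hw x y) (sub_nonneg.mpr (hx y)))

lemma gam_const_mul_right (c : ℝ) (f g : V → ℝ) (x : V) :
    gam w f (fun y => c * g y) x = c * gam w f g x := by
  have hfg : (fun y => f y * (c * g y)) = fun y => c * (f y * g y) := funext fun y => by ring
  simp only [gam, hfg, lap_const_mul]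
  ring

lemma two_mul_gam_self (f : V → ℝ) (x : V) : 2 * gam w f f x = gradsq w f x := by
  have hsum : ∑ y, w x y * (f x - f y) ^ 2
      = ∑ y, w x y * (f y * f y - f x * f x) - 2 * f x * ∑ y, w x y * (f y - f x) := by
    rw [mul_sum, ← sum_sub_distrib]
    exact sum_congr rfl fun y _ => by ring
  simp only [gam, lap, gradsq, hsum]
  ring

lemma gradsq_nonneg (hw : ∀ x y, 0 ≤ w x y) (f : V → ℝ) (x : V) : 0 ≤ gradsq w f x :=
  mul_nonneg (one_div_nonneg.mpr (deg_nonneg hw x))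
    (sum_nonneg fun y _ => mul_nonneg (hw x y) (sq_nonneg _))

lemma gam_self_nonneg (hw : ∀ x y, 0 ≤ w x y) (f : V → ℝ) (x : V) : 0 ≤ gam w f f x := by
  linarith [two_mul_gam_self (w := w) f x, gradsq_nonneg hw f x]

lemma gradsq_neg (f : V → ℝ) (x : V) : gradsq w (fun y => -f y) x = gradsq w f x := by
  simp only [gradsq, neg_sub_neg, sub_sq_comm (f x)]

lemma deg_mul_gradsq (hw : ∀ x y, 0 ≤ w x y) (f : V → ℝ) (x : V) :
    deg w x * gradsq w f x = ∑ y, w x y * (f x - f y) ^ 2 := by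
  by_cases hd : deg w x = 0
  · have hw0 : ∀ y, w x y = 0 := fun y =>
      (sum_eq_zero_iff_of_nonneg fun y _ => hw x y).mp hd y (mem_univ y)
    simp [hd, hw0]
  · simp only [gradsq]
    field_simp

end Laplacian

section Eigenfunction

variable {V : Type*} [Fintype V] {w : V → V → ℝ} {f : V → ℝ} {lam : ℝ}

lemma lap_eq_of_eigen (hf : ∀ x, -lap w f x = lam * f x) : lap w f = fun x => -lam * f x :=
  funext fun x => by linarith [hf x]

lemma mul_nonneg_of_forall_le (hw : ∀ x y, 0 ≤ w x y) (hf : ∀ x, -lap w f x = lam * f x)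
    {x : V} (hx : ∀ y, f y ≤ f x) : 0 ≤ lam * f x := by
  rw [← hf x]
  linarith [lap_nonpos_of_forall_le hw hx]

lemma mul_nonpos_of_forall_ge (hw : ∀ x y, 0 ≤ w x y) (hf : ∀ x, -lap w f x = lam * f x)
    {x : V} (hx : ∀ y, f x ≤ f y) : lam * f x ≤ 0 := by
  rw [← hf x]
  linarith [lap_nonneg_of_forall_ge hw hx]

lemma eigenvalue_pos (hw : ∀ x y, 0 ≤ w x y) (hf : ∀ x, -lap w f x = lam * f x)
    (hlam : lam ≠ 0) {xM xm : V} (hxM : ∀ y, f y ≤ f xM) (hxm : ∀ y, f xm ≤ f y)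
    (hlt : f xm < f xM) : 0 < lam := by
  have hM := mul_nonneg_of_forall_le hw hf hxM
  have hm := mul_nonpos_of_forall_ge hw hf hxm
  have hdiff : 0 ≤ lam * (f xM - f xm) := by linarith [mul_sub lam (f xM) (f xm)]
  exact lt_of_le_of_ne ((mul_nonneg_iff_of_pos_right (sub_pos.mpr hlt)).mp hdiff) hlam.symm

lemma abs_le_sub_of_eigen (hw : ∀ x y, 0 ≤ w x y) (hf : ∀ x, -lap w f x = lam * f x)
    (hlam : 0 < lam) {xM xm : V} (hxM : ∀ y, f y ≤ f xM) (hxm : ∀ y, f xm ≤ f y) (y : V) :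
    |f y| ≤ f xM - f xm := by
  have hfxM := nonneg_of_mul_nonneg_right (mul_nonneg_of_forall_le hw hf hxM) hlam
  have hfxm := nonpos_of_mul_nonpos_right (mul_nonpos_of_forall_ge hw hf hxm) hlam
  exact abs_le.mpr ⟨by linarith [hxm y], by linarith [hxM y]⟩

lemma lap_gam_self_add_of_eigen (hf : ∀ x, -lap w f x = lam * f x) (x : V) :
    lap w (fun y => gam w f f y + 2 * lam * f y ^ 2) x
      = 2 * gam2 w f f x + 2 * lam * gam w f f x - 4 * lam ^ 2 * f x ^ 2 := by
  have hsq : (fun y => 2 * lam * f y ^ 2) = fun y => 2 * lam * (f y * f y) :=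
    funext fun y => by ring
  have hlap_sq : lap w (fun y => f y * f y) x = 2 * gam w f f x + 2 * f x * lap w f x := by
    simp only [gam]
    ring
  have hgam_lap : gam w f (lap w f) x = -lam * gam w f f x := by
    rw [lap_eq_of_eigen hf, gam_const_mul_right]
  rw [lap_add, hsq, lap_const_mul, hlap_sq]
  simp only [gam2, hgam_lap]
  linear_combination (-4 * lam * f x) * hf x

lemma exists_forall_gam_self_add_le [Nonempty V] (hw : ∀ x y, 0 ≤ w x y) {m : ℝ}
    (hCD : CD w m 0) (hlam : 0 < lam) (hf : ∀ x, -lap w f x = lam * f x) :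
    ∃ z, ∀ x, gam w f f x + 2 * lam * f x ^ 2 ≤ (4 - 1 / m) * lam * f z ^ 2 := by
  obtain ⟨z, hz⟩ := Finite.exists_max fun y => gam w f f y + 2 * lam * f y ^ 2
  refine ⟨z, fun x => (hz x).trans ?_⟩
  have hmax := lap_nonpos_of_forall_le hw hz
  rw [lap_gam_self_add_of_eigen hf] at hmax
  have hcd : 1 / m * (lam * f z) ^ 2 ≤ gam2 w f f z := by
    have h := hCD f z
    rw [lap_eq_of_eigen hf] at h
    linarith [neg_mul lam (f z), neg_sq (lam * f z)]
  have hgam : gam w f f z ≤ (2 - 1 / m) * lam * f z ^ 2 :=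
    le_of_mul_le_mul_left (by nlinarith) hlam
  linarith

lemma two_le_four_sub_inv (hw : ∀ x y, 0 ≤ w x y) {m : ℝ} (hCD : CD w m 0) (hlam : 0 < lam)
    (hf : ∀ x, -lap w f x = lam * f x) (hf0 : ∃ y, f y ≠ 0) : 2 ≤ 4 - 1 / m := by
  obtain ⟨y, hy⟩ := hf0
  have : Nonempty V := ⟨y⟩
  obtain ⟨z, hz⟩ := exists_forall_gam_self_add_le hw hCD hlam hf
  have hy_pos : 0 < 2 * lam * f y ^ 2 := by positivity
  have hKz : 2 * lam * f y ^ 2 ≤ (4 - 1 / m) * lam * f z ^ 2 := by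
    linarith [hz y, gam_self_nonneg hw f y]
  have hfz : 0 < lam * f z ^ 2 := by
    rcases (sq_nonneg (f z)).lt_or_eq with h | h
    · positivity
    · rw [← h] at hKz
      linarith
  have hz2 : 0 ≤ (4 - 1 / m - 2) * (lam * f z ^ 2) := by
    linarith [hz z, gam_self_nonneg hw f z]
  linarith [(mul_nonneg_iff_of_pos_right hfz).mp hz2]

lemma gradsq_le_of_abs_le (hw : ∀ x y, 0 ≤ w x y) {m M : ℝ} (hCD : CD w m 0) (hlam : 0 < lam)
    (hf : ∀ x, -lap w f x = lam * f x) (hK : 0 ≤ 4 - 1 / m) (hM : ∀ y, |f y| ≤ M) (x : V) :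
    gradsq w f x ≤ 2 * ((4 - 1 / m) * lam * M ^ 2) := by
  have : Nonempty V := ⟨x⟩
  obtain ⟨z, hz⟩ := exists_forall_gam_self_add_le hw hCD hlam hf
  have hfz : f z ^ 2 ≤ M ^ 2 := sq_le_sq' (abs_le.mp (hM z)).1 (abs_le.mp (hM z)).2
  have hK : (4 - 1 / m) * lam * f z ^ 2 ≤ (4 - 1 / m) * lam * M ^ 2 :=
    mul_le_mul_of_nonneg_left hfz (mul_nonneg hK hlam.le)
  rw [← two_mul_gam_self]
  nlinarith [hz x, sq_nonneg (f x)]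

lemma gradsq_le_of_forall_le (hw : ∀ x y, 0 ≤ w x y) {x : V} (hf : -lap w f x = lam * f x)
    (hlam : 0 ≤ lam) (hx : ∀ y, f y ≤ f x) {M : ℝ} (hM : ∀ y, |f y| ≤ M) :
    gradsq w f x ≤ 2 * lam * M ^ 2 := by
  have hxM : f x ≤ M := (abs_le.mp (hM x)).2
  have hM0 : 0 ≤ M := (abs_nonneg _).trans (hM x)
  have hterm : ∀ y, w x y * (f x - f y) ^ 2 ≤ 2 * M * (w x y * -(f y - f x)) := fun y => by
    have h0 : 0 ≤ f x - f y := sub_nonneg.mpr (hx y)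
    have h1 : f x - f y ≤ 2 * M := by linarith [(abs_le.mp (hM y)).1]
    have hsq : (f x - f y) ^ 2 ≤ 2 * M * (f x - f y) := by nlinarith
    linarith [mul_le_mul_of_nonneg_left hsq (hw x y)]
  calc gradsq w f x ≤ 1 / deg w x * ∑ y, 2 * M * (w x y * -(f y - f x)) :=
        mul_le_mul_of_nonneg_left (sum_le_sum fun y _ => hterm y)
          (one_div_nonneg.mpr (deg_nonneg hw x))
    _ = 2 * M * (lam * f x) := by
        rw [← hf, lap, ← mul_sum]
        simp only [mul_neg, sum_neg_distrib]
        ring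
    _ ≤ 2 * lam * M ^ 2 := by nlinarith [mul_le_mul_of_nonneg_left hxM (mul_nonneg hlam hM0)]

lemma gradsq_le_of_forall_ge (hw : ∀ x y, 0 ≤ w x y) {x : V} (hf : -lap w f x = lam * f x)
    (hlam : 0 ≤ lam) (hx : ∀ y, f x ≤ f y) {M : ℝ} (hM : ∀ y, |f y| ≤ M) :
    gradsq w f x ≤ 2 * lam * M ^ 2 := by
  rw [← gradsq_neg]
  exact gradsq_le_of_forall_le hw (by rw [lap_neg]; linarith) hlam (fun y => neg_le_neg (hx y))
    fun y => (abs_neg (f y)).trans_le (hM y)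

end Eigenfunction

lemma sq_sub_le_of_adjacent_pair_sum_le (g : ℕ → ℝ) (n : ℕ) {A B : ℝ} (hAB : A ≤ B)
    (h0 : (g 0 - g 1) ^ 2 ≤ A) (hn : (g n - g (n + 1)) ^ 2 ≤ A)
    (hpair : ∀ i < n, (g i - g (i + 1)) ^ 2 + (g (i + 1) - g (i + 2)) ^ 2 ≤ 2 * B) :
    (g 0 - g (n + 1)) ^ 2 ≤ (n + 1) ^ 2 * B := by
  set t : ℕ → ℝ := fun i => (g i - g (i + 1)) ^ 2
  have hCS : (g 0 - g (n + 1)) ^ 2 ≤ (n + 1) * ∑ i ∈ range (n + 1), t i := by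
    have h := sq_sum_le_card_mul_sum_sq (s := range (n + 1)) (f := fun i => g i - g (i + 1))
    rw [sum_range_sub', card_range] at h
    exact_mod_cast h
  have hsplit : 2 * ∑ i ∈ range (n + 1), t i = ∑ i ∈ range n, (t i + t (i + 1)) + t 0 + t n := by
    rw [sum_add_distrib, two_mul]
    nth_rewrite 1 [sum_range_succ]
    rw [sum_range_succ']
    ring
  have hinner : ∑ i ∈ range n, (t i + t (i + 1)) ≤ n * (2 * B) := by
    simpa using sum_le_card_nsmul (range n) _ _ fun i hi => hpair i (mem_range.mp hi)
  have hsum : ∑ i ∈ range (n + 1), t i ≤ (n + 1) * B := by linarith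
  calc (g 0 - g (n + 1)) ^ 2 ≤ (n + 1) * ((n + 1) * B) :=
        hCS.trans (mul_le_mul_of_nonneg_left hsum (by positivity))
    _ = (n + 1) ^ 2 * B := by ring

section Graph

variable {V : Type*} {G : SimpleGraph V} [DecidableRel G.Adj]

def unitWeight (G : SimpleGraph V) [DecidableRel G.Adj] (x y : V) : ℝ :=
  if G.Adj x y then 1 else 0

lemma unitWeight_nonneg (x y : V) : 0 ≤ unitWeight G x y := by
  unfold unitWeight
  split_ifs <;> norm_num

variable [Fintype V]

lemma sum_unitWeight_mul (g : V → ℝ) (x : V) :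
    ∑ y, unitWeight G x y * g y = ∑ y ∈ G.neighborFinset x, g y := by
  simp [unitWeight, ite_mul, sum_ite, SimpleGraph.neighborFinset_eq_filter]

lemma deg_unitWeight (x : V) : deg (unitWeight G) x = G.degree x := by
  simpa [deg] using sum_unitWeight_mul (G := G) (fun _ => 1) x

lemma sum_neighborFinset_sq_sub_le (h : V → ℝ) (x : V) :
    ∑ y ∈ G.neighborFinset x, (h x - h y) ^ 2 ≤ G.maxDegree * gradsq (unitWeight G) h x := by
  rw [← sum_unitWeight_mul, ← deg_mul_gradsq unitWeight_nonneg, deg_unitWeight]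
  gcongr
  · exact gradsq_nonneg unitWeight_nonneg h x
  · exact G.degree_le_maxDegree x

lemma sq_sub_le_sum_neighborFinset (h : V → ℝ) {x a : V} (ha : G.Adj x a) :
    (h x - h a) ^ 2 ≤ ∑ y ∈ G.neighborFinset x, (h x - h y) ^ 2 :=
  single_le_sum (f := fun y => (h x - h y) ^ 2) (fun _ _ => sq_nonneg _)
    ((G.mem_neighborFinset x a).mpr ha)

lemma sq_sub_add_sq_sub_le_sum_neighborFinset (h : V → ℝ) {x a b : V} (ha : G.Adj x a)
    (hb : G.Adj x b) (hab : a ≠ b) :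
    (h x - h a) ^ 2 + (h x - h b) ^ 2 ≤ ∑ y ∈ G.neighborFinset x, (h x - h y) ^ 2 := by
  classical
  rw [← sum_pair (f := fun y => (h x - h y) ^ 2) hab]
  exact sum_le_sum_of_subset_of_nonneg (by simp [insert_subset_iff, ha, hb])
    fun _ _ _ => sq_nonneg _

lemma SimpleGraph.Walk.IsPath.sq_sub_le {u v : V} {p : G.Walk u v} (hp : p.IsPath)
    (h : V → ℝ) {A B : ℝ} (hAB : A ≤ B)
    (hE : ∀ x, ∑ y ∈ G.neighborFinset x, (h x - h y) ^ 2 ≤ 2 * B)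
    (hu : ∑ y ∈ G.neighborFinset u, (h u - h y) ^ 2 ≤ A)
    (hv : ∑ y ∈ G.neighborFinset v, (h v - h y) ^ 2 ≤ A) :
    (h u - h v) ^ 2 ≤ p.length ^ 2 * B := by
  rcases hlen : p.length with _ | n
  · simp [eq_of_length_eq_zero hlen]
  have hadj : ∀ i ≤ n, G.Adj (p.getVert i) (p.getVert (i + 1)) := fun i hi =>
    p.adj_getVert_succ (by omega)
  have hend : p.getVert (n + 1) = v := hlen ▸ p.getVert_length
  have key := sq_sub_le_of_adjacent_pair_sum_le (fun i => h (p.getVert i)) n hAB ?_ ?_ ?_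
  · simpa [hend] using key
  · simpa using (sq_sub_le_sum_neighborFinset h (by simpa using hadj 0 (by omega))).trans hu
  · have hadj_end := (hadj n le_rfl).symm
    rw [hend] at hadj_end
    simpa only [hend, sub_sq_comm (h (p.getVert n))] using
      (sq_sub_le_sum_neighborFinset h hadj_end).trans hv
  · intro i hi
    have hne : p.getVert i ≠ p.getVert (i + 2) := fun heq => by
      have := hp.getVert_injOn (by simp; omega) (by simp; omega) heq
      omega
    rw [sub_sq_comm]
    exact (sq_sub_add_sq_sub_le_sum_neighborFinset h (hadj i (by omega)).symm
      (hadj (i + 1) (by omega)) hne).trans (hE _)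

lemma SimpleGraph.Connected.sq_sub_le (hconn : G.Connected) (h : V → ℝ) {u v : V} {A B : ℝ}
    (hAB : A ≤ B) (hgrad : ∀ x, gradsq (unitWeight G) h x ≤ 2 * B)
    (hu : gradsq (unitWeight G) h u ≤ A) (hv : gradsq (unitWeight G) h v ≤ A) :
    (h u - h v) ^ 2 ≤ G.maxDegree * G.diam ^ 2 * B := by
  have : Nonempty V := hconn.nonempty
  obtain ⟨p, hp, hlen⟩ := hconn.exists_path_of_dist u v
  have hD : (p.length : ℝ) ≤ G.diam := by
    exact_mod_cast hlen ▸ G.dist_le_diam (G.connected_iff_ediam_ne_top.mp hconn)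
  have hd : (0 : ℝ) ≤ G.maxDegree := Nat.cast_nonneg _
  have hB : 0 ≤ B := by linarith [hgrad u, gradsq_nonneg (unitWeight_nonneg (G := G)) h u]
  have henergy : ∀ {x C}, gradsq (unitWeight G) h x ≤ C →
      ∑ y ∈ G.neighborFinset x, (h x - h y) ^ 2 ≤ G.maxDegree * C := fun hx =>
    (sum_neighborFinset_sq_sub_le h _).trans (mul_le_mul_of_nonneg_left hx hd)
  calc (h u - h v) ^ 2 ≤ p.length ^ 2 * (G.maxDegree * B) :=
        hp.sq_sub_le h (mul_le_mul_of_nonneg_left hAB hd)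
          (fun x => (henergy (hgrad x)).trans_eq (by ring)) (henergy hu) (henergy hv)
    _ ≤ G.diam ^ 2 * (G.maxDegree * B) := by gcongr
    _ = G.maxDegree * G.diam ^ 2 * B := by ring

end Graph

theorem eigenvalue_lower_bound_nonneg_curvature_general {V : Type*} [Fintype V]
    (G : SimpleGraph V) [DecidableRel G.Adj] (hconn : G.Connected)
    (m : ℝ)
    (hCD : CD (fun x y => if G.Adj x y then (1 : ℝ) else 0) m 0)
    (lam : ℝ) (hlam : lam ≠ 0) (f : V → ℝ)
    (hf : ∀ x, -lap (fun x y => if G.Adj x y then (1 : ℝ) else 0) f x = lam * f x)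
    (hnc : ∃ x y, f x ≠ f y) :
    lam ≥ 1 / ((4 - 1 / m) * (G.maxDegree : ℝ) * (G.diam : ℝ) ^ 2) := by
  change CD (unitWeight G) m 0 at hCD
  change ∀ x, -lap (unitWeight G) f x = lam * f x at hf
  have hw : ∀ x y, 0 ≤ unitWeight G x y := unitWeight_nonneg
  have : Nonempty V := hconn.nonempty
  obtain ⟨xM, hxM⟩ := Finite.exists_max f
  obtain ⟨xm, hxm⟩ := Finite.exists_min f
  obtain ⟨a, b, hab⟩ := hnc
  have hlt : f xm < f xM := by
    by_contra! hle
    exact hab (by linarith [hxM a, hxM b, hxm a, hxm b])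
  have hlam_pos := eigenvalue_pos hw hf hlam hxM hxm hlt
  have hM := abs_le_sub_of_eigen hw hf hlam_pos hxM hxm
  have hf0 : ∃ y, f y ≠ 0 := by
    by_contra! h0
    exact hlt.ne (by rw [h0 xm, h0 xM])
  have hK := two_le_four_sub_inv hw hCD hlam_pos hf hf0
  set M := f xM - f xm
  have hosc : M ^ 2 ≤ G.maxDegree * G.diam ^ 2 * ((4 - 1 / m) * lam * M ^ 2) :=
    hconn.sq_sub_le f (by gcongr) (gradsq_le_of_abs_le hw hCD hlam_pos hf (by linarith) hM)
      (gradsq_le_of_forall_le hw (hf xM) hlam_pos.le hxM hM)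
      (gradsq_le_of_forall_ge hw (hf xm) hlam_pos.le hxm hM)
  have hone : 1 ≤ (4 - 1 / m) * G.maxDegree * G.diam ^ 2 * lam :=
    le_of_mul_le_mul_left (by linarith) (pow_pos (sub_pos.mpr hlt) 2)
  rw [ge_iff_le, div_le_iff₀ (by nlinarith)]
  linarith

theorem eigenvalue_lower_bound_nonneg_curvature {V : Type*} [Fintype V]
    (G : SimpleGraph V) [DecidableRel G.Adj] (hconn : G.Connected)
    (m : ℝ) (hm : 0 < m)
    (hCD : CD (fun x y => if G.Adj x y then (1 : ℝ) else 0) m 0)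
    (lam : ℝ) (hlam : lam ≠ 0) (f : V → ℝ)
    (hf : ∀ x, -lap (fun x y => if G.Adj x y then (1 : ℝ) else 0) f x = lam * f x)
    (hnc : ∃ x y, f x ≠ f y) :
    lam ≥ 1 / ((4 - 1 / m) * (G.maxDegree : ℝ) * (G.diam : ℝ) ^ 2) :=
  eigenvalue_lower_bound_nonneg_curvature_general G hconn m hCD lam hlam f hf hnc
end
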